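/- Let W be a closed walk in a digraph that uses every arc exactly once (an Eulerian circuit) starting at vertex r, and for each vertex v ≠ r let e_v be the last arc of W with tail v. Then the walk starting at r that at each vertex takes an unvisited arc distinct from e_v whenever possible (taking e_v only when all other outgoing arcs of v are used) is itself an Eulerian circuit. -/

import Mathlib

/-!
The walk `es` can only stop at a vertex all of whose out-arcs it has used. The digraph is
balanced, as it carries the closed walk `es₀`, so counting the in- and out-arcs of that vertex
used by `es` shows that it is `r`; and then, `es` being closed, every vertex all of whose
out-arcs are used also has all its in-arcs used. Now if a vertex `v` had an unused out-arc, then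
`v ≠ r` and the avoidance rule leaves `f v` unused, so `hd (f v)` has an unused in-arc, hence an
unused out-arc. This cannot go on forever: the arc following `f v` in `es₀` leaves `hd (f v)`, so
the position of `f (hd (f v))` in `es₀` is larger than that of `f v`.
-/

open List

theorem List.Subperm.forall_mem_imp_mem_iff_countP_le {α : Type*} {l₁ l₂ : List α}
    (h : l₁ <+~ l₂) (hl₂ : l₂.Nodup) (p : α → Bool) :
    (∀ x ∈ l₂, p x → x ∈ l₁) ↔ l₂.countP p ≤ l₁.countP p := by
  simp only [countP_eq_length_filter]
  refine ⟨fun hp => ?_, fun hle x hx hpx => ?_⟩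
  · refine (subperm_of_subset (hl₂.filter p) fun x hx => ?_).length_le
    rw [mem_filter] at hx ⊢
    exact ⟨hp x hx.1 hx.2, hx.2⟩
  · have hperm := (h.filter p).perm_of_length_le hle
    exact mem_of_mem_filter (hperm.mem_iff.2 (mem_filter.2 ⟨hx, hpx⟩))

section Walks

variable {V E : Type*} (tl hd : E → V)

theorem countP_tl_add_eq_countP_hd_add [DecidableEq V] {es : List E} {a b : V}
    (hchain : es.IsChain (fun e f => hd e = tl f)) (ha : es.head?.map tl = some a)
    (hb : es.getLast?.map hd = some b) (v : V) :
    es.countP (tl · = v) + (if b = v then 1 else 0)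
      = es.countP (hd · = v) + (if a = v then 1 else 0) := by
  induction es generalizing a with
  | nil => simp at ha
  | cons e l ih =>
    simp only [head?_cons, Option.map_some, Option.some.injEq] at ha
    subst ha
    cases l with
    | nil =>
      simp only [getLast?_singleton, Option.map_some, Option.some.injEq] at hb
      subst hb
      simp only [countP_singleton]
      split_ifs <;> simp_all
    | cons e' l =>
      rw [isChain_cons_cons] at hchain
      have := ih hchain.2 rfl (by rwa [getLast?_cons_cons] at hb)
      simp only [countP_cons, hchain.1] at this ⊢
      split_ifs at this ⊢ <;> simp_all

theorem countP_tl_eq_countP_hd_of_closed [DecidableEq V] {es : List E} {a : V}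
    (hchain : es.IsChain (fun e f => hd e = tl f)) (ha : es.head?.map tl = some a)
    (hb : es.getLast?.map hd = some a) (v : V) :
    es.countP (tl · = v) = es.countP (hd · = v) := by
  simpa using countP_tl_add_eq_countP_hd_add tl hd hchain ha hb v

variable {es₀ es : List E}

theorem end_eq_start_of_out_arcs_mem [DecidableEq V]
    (hbal₀ : ∀ v, es₀.countP (tl · = v) = es₀.countP (hd · = v)) (h₀nodup : es₀.Nodup)
    (hsub : es <+~ es₀) (hchain : es.IsChain (fun e f => hd e = tl f)) {a b : V}
    (ha : es.head?.map tl = some a) (hb : es.getLast?.map hd = some b)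
    (hout : ∀ e ∈ es₀, tl e = b → e ∈ es) : b = a := by
  by_contra hba
  have hwalk := countP_tl_add_eq_countP_hd_add tl hd hchain ha hb b
  rw [if_pos rfl, if_neg (Ne.symm hba)] at hwalk
  have hout_le := (hsub.forall_mem_imp_mem_iff_countP_le h₀nodup _).1
    fun e he hte => hout e he (of_decide_eq_true hte)
  have hin_le := hsub.countP_le (hd · = b)
  have := hbal₀ b
  omega

theorem in_arcs_mem_of_out_arcs_mem [DecidableEq V]
    (hbal₀ : ∀ v, es₀.countP (tl · = v) = es₀.countP (hd · = v)) (h₀nodup : es₀.Nodup)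
    (hsub : es <+~ es₀) (hbal : ∀ v, es.countP (tl · = v) = es.countP (hd · = v)) {v : V}
    (hout : ∀ e ∈ es₀, tl e = v → e ∈ es) : ∀ e ∈ es₀, hd e = v → e ∈ es := by
  have hout_le := (hsub.forall_mem_imp_mem_iff_countP_le h₀nodup _).1
    fun e he hte => hout e he (of_decide_eq_true hte)
  have hin_le := hsub.countP_le (hd · = v)
  have := hbal₀ v
  have := hbal v
  intro e he hde
  exact (hsub.forall_mem_imp_mem_iff_countP_le h₀nodup (hd · = v)).2 (by omega) e he
    (decide_eq_true hde)

theorem idxOf_lt_idxOf_of_forall_idxOf_le [DecidableEq E] {r : V}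
    (h₀chain : es₀.IsChain (fun e f => hd e = tl f)) (h₀nodup : es₀.Nodup)
    (h₀end : es₀.getLast?.map hd = some r) {e g : E} (he : e ∈ es₀) (hr : hd e ≠ r)
    (hg : ∀ e' ∈ es₀, tl e' = hd e → es₀.idxOf e' ≤ es₀.idxOf g) :
    es₀.idxOf e < es₀.idxOf g := by
  have hi : es₀.idxOf e < es₀.length := idxOf_lt_length_iff.2 he
  have hi1 : es₀.idxOf e + 1 < es₀.length := by
    by_contra hlast
    have : es₀.getLast? = some e := by
      rw [getLast?_eq_getElem?, show es₀.length - 1 = es₀.idxOf e by omega,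
        getElem?_eq_getElem hi, getElem_idxOf]
    simp only [this, Option.map_some, Option.some.injEq] at h₀end
    exact hr h₀end
  have hnext : tl es₀[es₀.idxOf e + 1] = hd e := by
    rw [← isChain_iff_getElem.1 h₀chain _ hi1, getElem_idxOf]
  calc es₀.idxOf e < es₀.idxOf e + 1 := Nat.lt_succ_self _
    _ = es₀.idxOf es₀[es₀.idxOf e + 1] := (h₀nodup.idxOf_getElem _ hi1).symm
    _ ≤ es₀.idxOf g := hg _ (getElem_mem hi1) hnext

theorem eq_empty_of_mapsTo_hd_comp_lastArc [DecidableEq E] {r : V} {f : V → E}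
    (h₀chain : es₀.IsChain (fun e f => hd e = tl f)) (h₀nodup : es₀.Nodup)
    (h₀end : es₀.getLast?.map hd = some r) (hfmem : ∀ v, v ≠ r → f v ∈ es₀)
    (hflast : ∀ v, v ≠ r → ∀ e ∈ es₀, tl e = v → es₀.idxOf e ≤ es₀.idxOf (f v))
    {S : Set V} (hS : Set.MapsTo (hd ∘ f) S S) (hr : r ∉ S) : S = ∅ := by
  have hSr : ∀ v ∈ S, v ≠ r := fun v hv hvr => hr (hvr ▸ hv)
  refine Set.eq_empty_of_forall_notMem fun v => ?_
  induction hn : es₀.length - es₀.idxOf (f v) using Nat.strong_induction_on generalizing v with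
  | _ n ih =>
    intro hv
    have hv' : hd (f v) ∈ S := hS hv
    have hlt := idxOf_lt_idxOf_of_forall_idxOf_le tl hd h₀chain h₀nodup h₀end
      (hfmem v (hSr v hv)) (hSr _ hv') (hflast _ (hSr _ hv'))
    have := idxOf_le_length (l := es₀) (a := f (hd (f v)))
    exact ih _ (by omega) _ rfl hv'

theorem lastArc_not_mem_of_out_arc_not_mem {r : V} {f : V → E}
    (havoid : ∀ i (hi : i < es.length), tl es[i] ≠ r → es[i] = f (tl es[i]) →
      ∀ e : E, tl e = tl es[i] → e ≠ es[i] → e ∈ es.take i)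
    {v : V} (hv : v ≠ r) (hfv : tl (f v) = v) {e : E} (he : tl e = v) (hes : e ∉ es) :
    f v ∉ es := by
  intro hmem
  obtain ⟨i, hi, hget⟩ := getElem_of_mem hmem
  have htl : tl es[i] = v := hget ▸ hfv
  refine hes (take_subset i es
    (havoid i hi (htl ▸ hv) (by rw [htl, hget]) e (by rw [htl, he]) ?_))
  rintro rfl
  exact hes (getElem_mem hi)

end Walks

theorem walk_avoiding_lastArc_tree_is_eulerian {V E : Type*}
    [DecidableEq V] [DecidableEq E]
    (tl hd : E → V) (r : V)
    -- es₀ is an Eulerian circuit starting and ending at r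
    (es₀ : List E)
    (h₀start : es₀.head?.map tl = some r)
    (h₀end : es₀.getLast?.map hd = some r)
    (h₀chain : List.Chain' (fun e f => hd e = tl f) es₀)
    (h₀nodup : es₀.Nodup)
    (h₀all : ∀ e : E, e ∈ es₀)
    -- f v is the last arc of es₀ with tail v, for v ≠ r
    (f : V → E)
    (hf : ∀ v : V, v ≠ r → tl (f v) = v ∧
      ∀ e ∈ es₀, tl e = v → es₀.idxOf e ≤ es₀.idxOf (f v))
    -- es is a walk starting at r ...
    (es : List E)
    (hstart : es = [] ∨ es.head?.map tl = some r)
    (hchain : List.Chain' (fun e f => hd e = tl f) es)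
    -- ... never repeating an arc ...
    (hnodup : es.Nodup)
    -- ... using the arc f v at a vertex v ≠ r only when every other outgoing arc of v
    -- has already been used ...
    (havoid : ∀ i (hi : i < es.length), tl (es.get ⟨i, hi⟩) ≠ r →
      es.get ⟨i, hi⟩ = f (tl (es.get ⟨i, hi⟩)) →
      ∀ e : E, tl e = tl (es.get ⟨i, hi⟩) → e ≠ es.get ⟨i, hi⟩ → e ∈ es.take i)
    -- ... and stopping only when every outgoing arc of the final vertex has been used
    (hstop : ∀ e : E, tl e = ((es.getLast?.map hd).getD r) → e ∈ es) :
    (∀ e : E, e ∈ es) ∧ (es ≠ [] → es.getLast?.map hd = some r) := by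
  have hsub : es <+~ es₀ := subperm_of_subset hnodup fun e _ => h₀all e
  have hbal₀ := countP_tl_eq_countP_hd_of_closed tl hd h₀chain h₀start h₀end
  rcases hstart with rfl | hstart
  · obtain ⟨e₀, -, hr⟩ := Option.map_eq_some_iff.1 h₀start
    exact absurd (hstop e₀ (by simpa using hr)) not_mem_nil
  have hne : es ≠ [] := by rintro rfl; simp at hstart
  obtain ⟨b, hb⟩ : ∃ b, es.getLast?.map hd = some b :=
    ⟨_, by rw [getLast?_eq_some_getLast hne]; rfl⟩
  have hend : es.getLast?.map hd = some r := by
    rwa [end_eq_start_of_out_arcs_mem tl hd hbal₀ h₀nodup hsub hchain hstart hb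
      fun e _ he => hstop e (by rw [hb]; exact he)] at hb
  have hout_r : ∀ e, tl e = r → e ∈ es := fun e he => hstop e (by rw [hend]; exact he)
  have hbal := countP_tl_eq_countP_hd_of_closed tl hd hchain hstart hend
  have hunused : {v | ∃ e, tl e = v ∧ e ∉ es} = ∅ := by
    refine eq_empty_of_mapsTo_hd_comp_lastArc tl hd h₀chain h₀nodup h₀end
      (fun v _ => h₀all _) (fun v hv => (hf v hv).2) ?_ fun ⟨e, he, hes⟩ => hes (hout_r e he)
    rintro v ⟨e, he, hes⟩
    have hvr : v ≠ r := fun h => hes (hout_r e (he.trans h))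
    have hfv := lastArc_not_mem_of_out_arc_not_mem tl havoid hvr (hf v hvr).1 he hes
    show ∃ e, tl e = hd (f v) ∧ e ∉ es
    by_contra! hall
    exact hfv (in_arcs_mem_of_out_arcs_mem tl hd hbal₀ h₀nodup hsub hbal
      (fun e _ he => hall e he) _ (h₀all _) rfl)
  exact ⟨fun e => by_contra fun he => hunused.subset ⟨e, rfl, he⟩, fun _ => hend⟩
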